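/- For κ > 0, the map t ↦ q_κ(t) = P(|Z₀| ≤ κ, |Z_t| ≤ κ), where (Z₀, Z_t) is a centered bivariate Gaussian pair with unit variances and correlation t, is non-decreasing on [0,1). -/

import Mathlib

/-!
Conditioning on `Z₀ = x` gives `q_κ(t) = ∫_{-κ}^{κ} φ(x) P(|Z_t| ≤ κ | Z₀ = x) dx`, where the
conditional probability is the integral of `φ` between `(±κ - t x) / √(1 - t²)`. Differentiate in
`t` under the integral sign. The factorisation
`φ(x) φ((d - t x) / √(1 - t²)) = √(1 - t²) φ(d) p_{t d}(x)`, with `p_m` the density of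
`N(m, 1 - t²)`, makes the integrand of `q_κ'(t)` an exact derivative in `x`, and
`q_κ'(t) = 2 φ(κ) (p_{tκ}(κ) - p_{tκ}(-κ))`. For `t ≥ 0` the point `κ` is closer than `-κ` to the
mean `tκ`, so this is nonnegative.
-/

open MeasureTheory ProbabilityTheory

/-- `q κ t = P(|Z₀| ≤ κ, |Z_t| ≤ κ)` for a correlation-`t` bivariate standard Gaussian pair. -/
noncomputable def qGauss (κ t : ℝ) : ℝ :=
  (((gaussianReal 0 1).prod (gaussianReal 0 1))
    {p : ℝ × ℝ | |p.1| ≤ κ ∧ |t * p.1 + Real.sqrt (1 - t ^ 2) * p.2| ≤ κ}).toReal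

open Real Set Filter Topology intervalIntegral

namespace ProbabilityTheory

@[fun_prop]
lemma continuous_gaussianPDFReal (μ : ℝ) (v : NNReal) : Continuous (gaussianPDFReal μ v) := by
  rw [gaussianPDFReal_def]
  fun_prop

lemma hasDerivAt_gaussianPDFReal (μ : ℝ) (v : NNReal) (x : ℝ) :
    HasDerivAt (gaussianPDFReal μ v) (-(x - μ) / v * gaussianPDFReal μ v x) x := by
  have hexp : HasDerivAt (fun y => -(y - μ) ^ 2 / (2 * v)) (-(x - μ) / v) x :=
    ((((hasDerivAt_id' x).sub_const μ).fun_pow 2).fun_neg.div_const _).congr_deriv (by ring)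
  rw [gaussianPDFReal_def]
  exact (hexp.exp.const_mul _).congr_deriv (by ring)

lemma gaussianPDFReal_neg_neg (μ : ℝ) (v : NNReal) (x : ℝ) :
    gaussianPDFReal (-μ) v (-x) = gaussianPDFReal μ v x := by
  simp only [gaussianPDFReal_def]
  ring_nf

lemma gaussianPDFReal_le_of_sq_sub_le {μ x y : ℝ} (v : NNReal) (h : (x - μ) ^ 2 ≤ (y - μ) ^ 2) :
    gaussianPDFReal μ v y ≤ gaussianPDFReal μ v x := by
  simp only [gaussianPDFReal_def]
  gcongr

lemma gaussianReal_real_Icc (μ : ℝ) {v : NNReal} (hv : v ≠ 0) {a b : ℝ} (hab : a ≤ b) :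
    (gaussianReal μ v).real (Icc a b) = ∫ u in a..b, gaussianPDFReal μ v u := by
  rw [measureReal_def, gaussianReal_apply_eq_integral μ hv, ENNReal.toReal_ofReal
      (setIntegral_nonneg measurableSet_Icc fun _ _ => gaussianPDFReal_nonneg _ _ _),
    integral_Icc_eq_integral_Ioc, integral_of_le hab]

lemma gaussianReal_real_abs_add_mul_le {κ σ : ℝ} (hκ : 0 ≤ κ) (hσ : 0 < σ) (c : ℝ) :
    (gaussianReal 0 1).real {y | |c + σ * y| ≤ κ}
      = ∫ u in (-κ - c) / σ..(κ - c) / σ, gaussianPDFReal 0 1 u := by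
  have hslab : {y | |c + σ * y| ≤ κ} = Icc ((-κ - c) / σ) ((κ - c) / σ) := by
    ext y
    simp only [mem_ofPred_eq, mem_Icc, abs_le, div_le_iff₀ hσ, le_div_iff₀ hσ]
    constructor <;> rintro ⟨h₁, h₂⟩ <;> constructor <;> linarith
  rw [hslab, gaussianReal_real_Icc 0 one_ne_zero (by gcongr; linarith)]

/-- The joint density of `(Z₀, Z_t)` factors through the conditional law `N(t d, 1 - t²)` of
`Z₀` given `Z_t = d`. -/
lemma gaussianPDFReal_mul_gaussianPDFReal_div_sqrt {t : ℝ} (ht : t ^ 2 < 1) (x d : ℝ) :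
    gaussianPDFReal 0 1 x * gaussianPDFReal 0 1 ((d - t * x) / √(1 - t ^ 2))
      = √(1 - t ^ 2) * gaussianPDFReal 0 1 d * gaussianPDFReal (t * d) (1 - t ^ 2).toNNReal x := by
  have hσ : 0 < 1 - t ^ 2 := by linarith
  have hexp : -(x - 0) ^ 2 / (2 * 1) + -((d - t * x) / √(1 - t ^ 2) - 0) ^ 2 / (2 * 1)
      = -(d - 0) ^ 2 / (2 * 1) + -(x - t * d) ^ 2 / (2 * (1 - t ^ 2)) := by
    simp only [sub_zero, div_pow, sq_sqrt hσ.le]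
    field_simp
    ring
  simp only [gaussianPDFReal_def, NNReal.coe_one, Real.coe_toNNReal _ hσ.le,
    sqrt_mul (by positivity : 0 ≤ 2 * π) (1 - t ^ 2)]
  rw [mul_mul_mul_comm, ← exp_add, hexp, exp_add]
  field_simp

end ProbabilityTheory

lemma Continuous.intervalIntegral_bounds {E : Type*} [NormedAddCommGroup E] [NormedSpace ℝ E]
    [CompleteSpace E] {f : ℝ → E} (hf : Continuous f) {a b : ℝ → ℝ}
    (ha : Continuous a) (hb : Continuous b) :
    Continuous fun s => ∫ u in a s..b s, f u := by
  have hF : Continuous fun w => ∫ u in (0 : ℝ)..w, f u :=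
    continuous_primitive (fun _ _ => hf.intervalIntegrable _ _) 0
  simp only [← integral_interval_sub_left (hf.intervalIntegrable 0 (b _))
    (hf.intervalIntegrable 0 (a _))]
  exact (hF.comp hb).sub (hF.comp ha)

lemma Continuous.hasDerivAt_intervalIntegral_bounds {E : Type*} [NormedAddCommGroup E]
    [NormedSpace ℝ E] [CompleteSpace E] {f : ℝ → E} (hf : Continuous f) {a b : ℝ → ℝ}
    {a' b' t : ℝ} (ha : HasDerivAt a a' t) (hb : HasDerivAt b b' t) :
    HasDerivAt (fun s => ∫ u in a s..b s, f u) (b' • f (b t) - a' • f (a t)) t := by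
  have hF (z : ℝ) : HasDerivAt (fun w => ∫ u in (0 : ℝ)..w, f u) (f z) z :=
    (hf.integral_hasStrictDerivAt 0 z).hasDerivAt
  simp only [← integral_interval_sub_left (hf.intervalIntegrable 0 (b _))
    (hf.intervalIntegrable 0 (a _))]
  exact ((hF (b t)).scomp t hb).sub ((hF (a t)).scomp t ha)

lemma hasDerivAt_sub_mul_div_sqrt_one_sub_sq (d x : ℝ) {t : ℝ} (ht : t ^ 2 < 1) :
    HasDerivAt (fun s => (d - s * x) / √(1 - s ^ 2)) ((t * d - x) / √(1 - t ^ 2) ^ 3) t := by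
  have hσ : 0 < 1 - t ^ 2 := by linarith
  have hnum : HasDerivAt (fun s => d - s * x) (-x) t := by
    simpa using ((hasDerivAt_id t).mul_const x).const_sub d
  have hden : HasDerivAt (fun s => √(1 - s ^ 2)) (-(2 * t) / (2 * √(1 - t ^ 2))) t := by
    simpa using ((hasDerivAt_pow 2 t).const_sub 1).sqrt hσ.ne'
  refine (hnum.div hden (sqrt_pos.mpr hσ).ne').congr_deriv ?_
  have hsq : √(1 - t ^ 2) ^ 2 = 1 - t ^ 2 := sq_sqrt hσ.le
  field_simp
  linear_combination (-x) * hsq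

/-- `P(|Z_t| ≤ κ | Z₀ = x)`, since `Z_t = t Z₀ + √(1 - t²) Z'` with `Z'` independent of `Z₀`. -/
noncomputable def condProb (κ t x : ℝ) : ℝ :=
  ∫ u in (-κ - t * x) / √(1 - t ^ 2)..(κ - t * x) / √(1 - t ^ 2), gaussianPDFReal 0 1 u

lemma continuous_condProb (κ t : ℝ) : Continuous (condProb κ t) :=
  (continuous_gaussianPDFReal 0 1).intervalIntegral_bounds (by fun_prop) (by fun_prop)

lemma gaussianReal_real_prodMk_preimage {κ t : ℝ} (hκ : 0 ≤ κ) (ht : t ^ 2 < 1) (x : ℝ) :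
    (gaussianReal 0 1).real
        (Prod.mk x ⁻¹' {p : ℝ × ℝ | |p.1| ≤ κ ∧ |t * p.1 + √(1 - t ^ 2) * p.2| ≤ κ})
      = (Icc (-κ) κ).indicator (condProb κ t) x := by
  by_cases hx : |x| ≤ κ
  · rw [indicator_of_mem (show x ∈ Icc (-κ) κ from abs_le.mp hx), condProb,
      ← gaussianReal_real_abs_add_mul_le hκ (sqrt_pos.mpr (by linarith))]
    simp only [preimage_ofPred_eq, hx, true_and]
  · rw [indicator_of_notMem (show x ∉ Icc (-κ) κ from fun h => hx (abs_le.mpr h))]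
    simp [hx]

lemma qGauss_eq_integral {κ t : ℝ} (hκ : 0 ≤ κ) (ht : t ^ 2 < 1) :
    qGauss κ t = ∫ x in -κ..κ, condProb κ t x * gaussianPDFReal 0 1 x := by
  have hS : MeasurableSet {p : ℝ × ℝ | |p.1| ≤ κ ∧ |t * p.1 + √(1 - t ^ 2) * p.2| ≤ κ} := by
    measurability
  rw [qGauss, Measure.prod_apply hS, ← integral_toReal
    (measurable_measure_prodMk_left hS).aemeasurable (ae_of_all _ fun _ => measure_lt_top _ _)]
  simp only [← measureReal_def, gaussianReal_real_prodMk_preimage hκ ht]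
  rw [integral_gaussianReal_eq_integral_smul one_ne_zero]
  simp only [smul_eq_mul, mul_comm (gaussianPDFReal 0 1 _), ← indicator_mul_left]
  rw [MeasureTheory.integral_indicator measurableSet_Icc, integral_Icc_eq_integral_Ioc,
    ← integral_of_le (by linarith)]

noncomputable def condProbDeriv (κ t x : ℝ) : ℝ :=
  (t * κ - x) / √(1 - t ^ 2) ^ 3 * gaussianPDFReal 0 1 ((κ - t * x) / √(1 - t ^ 2))
    - (t * -κ - x) / √(1 - t ^ 2) ^ 3 * gaussianPDFReal 0 1 ((-κ - t * x) / √(1 - t ^ 2))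

lemma hasDerivAt_condProb (κ x : ℝ) {t : ℝ} (ht : t ^ 2 < 1) :
    HasDerivAt (fun s => condProb κ s x) (condProbDeriv κ t x) t :=
  (continuous_gaussianPDFReal 0 1).hasDerivAt_intervalIntegral_bounds
    (hasDerivAt_sub_mul_div_sqrt_one_sub_sq _ x ht) (hasDerivAt_sub_mul_div_sqrt_one_sub_sq κ x ht)

lemma continuous_condProbDeriv_mul_gaussianPDFReal (κ t : ℝ) :
    Continuous fun x => condProbDeriv κ t x * gaussianPDFReal 0 1 x := by
  unfold condProbDeriv
  fun_prop

lemma continuousOn_condProbDeriv_mul_gaussianPDFReal (κ : ℝ) :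
    ContinuousOn (fun p : ℝ × ℝ => condProbDeriv κ p.1 p.2 * gaussianPDFReal 0 1 p.2)
      {p | p.1 ^ 2 < 1} := by
  intro p hp
  have hσ : √(1 - p.1 ^ 2) ≠ 0 := (sqrt_pos.mpr (sub_pos.mpr hp)).ne'
  unfold condProbDeriv
  apply ContinuousAt.continuousWithinAt
  fun_prop (disch := first | exact hσ | exact pow_ne_zero _ hσ)

lemma hasDerivAt_qGauss {κ t : ℝ} (hκ : 0 ≤ κ) (ht : t ^ 2 < 1) :
    HasDerivAt (qGauss κ) (∫ x in -κ..κ, condProbDeriv κ t x * gaussianPDFReal 0 1 x) t := by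
  have hU : {s : ℝ | s ^ 2 < 1} ∈ 𝓝 t := (isOpen_lt (by fun_prop) continuous_const).mem_nhds ht
  obtain ⟨K, hKt, hKU, hK⟩ := local_compact_nhds hU
  obtain ⟨C, hC⟩ := (hK.prod isCompact_uIcc).exists_bound_of_continuousOn
    ((continuousOn_condProbDeriv_mul_gaussianPDFReal κ).mono fun p hp => hKU (mem_prod.mp hp).1)
  have hF (s : ℝ) : Continuous fun x => condProb κ s x * gaussianPDFReal 0 1 x :=
    (continuous_condProb κ s).mul (continuous_gaussianPDFReal 0 1)
  have key := hasDerivAt_integral_of_dominated_loc_of_deriv_le (a := -κ) (b := κ)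
    (bound := fun _ => C) hKt (Eventually.of_forall fun s => (hF s).aestronglyMeasurable)
    ((hF t).intervalIntegrable _ _)
    (continuous_condProbDeriv_mul_gaussianPDFReal κ t).aestronglyMeasurable
    (ae_of_all _ fun x hx s hs => hC (s, x) ⟨hs, uIoc_subset_uIcc hx⟩)
    (intervalIntegrable_const (μ := volume))
    (ae_of_all _ fun x _ s hs => (hasDerivAt_condProb κ x (hKU hs)).mul_const _)
  refine key.2.congr_of_eventuallyEq ?_
  filter_upwards [hU] with s hs using qGauss_eq_integral hκ hs

lemma hasDerivAt_condProbDeriv_primitive (κ : ℝ) {t : ℝ} (ht : t ^ 2 < 1) (x : ℝ) :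
    HasDerivAt (fun y => gaussianPDFReal 0 1 κ * (gaussianPDFReal (t * κ) (1 - t ^ 2).toNNReal y
        - gaussianPDFReal (t * -κ) (1 - t ^ 2).toNNReal y))
      (condProbDeriv κ t x * gaussianPDFReal 0 1 x) x := by
  have hσ : 0 < 1 - t ^ 2 := by linarith
  refine (((hasDerivAt_gaussianPDFReal _ _ x).sub (hasDerivAt_gaussianPDFReal _ _ x)).const_mul
    _).congr_deriv ?_
  have hup := gaussianPDFReal_mul_gaussianPDFReal_div_sqrt ht x κ
  have hlow := gaussianPDFReal_mul_gaussianPDFReal_div_sqrt ht x (-κ)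
  rw [← neg_zero, gaussianPDFReal_neg_neg, neg_zero] at hlow
  simp only [condProbDeriv, Real.coe_toNNReal _ hσ.le]
  generalize gaussianPDFReal (t * κ) (1 - t ^ 2).toNNReal x = P at hup ⊢
  generalize gaussianPDFReal (t * -κ) (1 - t ^ 2).toNNReal x = Q at hlow ⊢
  have hsq : 1 - t ^ 2 = √(1 - t ^ 2) ^ 2 := (sq_sqrt hσ.le).symm
  set σ := √(1 - t ^ 2)
  rw [hsq]
  linear_combination (norm := skip) (-(t * κ - x) / σ ^ 3) * hup + ((t * -κ - x) / σ ^ 3) * hlow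
  field_simp
  ring

lemma integral_condProbDeriv_mul_gaussianPDFReal (κ : ℝ) {t : ℝ} (ht : t ^ 2 < 1) :
    ∫ x in -κ..κ, condProbDeriv κ t x * gaussianPDFReal 0 1 x
      = 2 * gaussianPDFReal 0 1 κ * (gaussianPDFReal (t * κ) (1 - t ^ 2).toNNReal κ
        - gaussianPDFReal (t * κ) (1 - t ^ 2).toNNReal (-κ)) := by
  rw [integral_eq_sub_of_hasDerivAt (fun x _ => hasDerivAt_condProbDeriv_primitive κ ht x)
    ((continuous_condProbDeriv_mul_gaussianPDFReal κ t).intervalIntegrable _ _)]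
  have hsymm (y : ℝ) : gaussianPDFReal (t * -κ) (1 - t ^ 2).toNNReal y
      = gaussianPDFReal (t * κ) (1 - t ^ 2).toNNReal (-y) := by
    rw [mul_neg, ← gaussianPDFReal_neg_neg (t * κ), neg_neg]
  rw [hsymm, hsymm, neg_neg]
  ring

lemma integral_condProbDeriv_mul_gaussianPDFReal_nonneg (κ : ℝ) {t : ℝ} (ht₀ : 0 ≤ t)
    (ht : t ^ 2 < 1) : 0 ≤ ∫ x in -κ..κ, condProbDeriv κ t x * gaussianPDFReal 0 1 x := by
  rw [integral_condProbDeriv_mul_gaussianPDFReal κ ht]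
  have hcloser := gaussianPDFReal_le_of_sq_sub_le (μ := t * κ) (x := κ) (y := -κ)
    (1 - t ^ 2).toNNReal (by nlinarith [mul_nonneg ht₀ (sq_nonneg κ)])
  exact mul_nonneg (mul_nonneg zero_le_two (gaussianPDFReal_nonneg 0 1 κ)) (sub_nonneg.mpr hcloser)

/-- For `κ > 0`, the map `t ↦ q_κ(t)` is non-decreasing on `[0,1)`. -/
theorem stmt3 (κ : ℝ) (hκ : 0 < κ) : MonotoneOn (qGauss κ) (Set.Ico (0 : ℝ) 1) := by
  have hsq {t : ℝ} (ht : t ∈ Ico (0 : ℝ) 1) : t ^ 2 < 1 := by nlinarith [ht.1, ht.2]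
  refine monotoneOn_of_hasDerivWithinAt_nonneg (convex_Ico 0 1)
    (fun t ht => (hasDerivAt_qGauss hκ.le (hsq ht)).continuousAt.continuousWithinAt)
    (fun t ht => (hasDerivAt_qGauss hκ.le (hsq (interior_subset ht))).hasDerivWithinAt)
    fun t ht => ?_
  rw [interior_Ico] at ht
  exact integral_condProbDeriv_mul_gaussianPDFReal_nonneg κ ht.1.le (hsq (Ioo_subset_Ico_self ht))
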